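/- arXiv:2306.02805 — 2 statements merged into one kernel-verified Lean document; each statement's English description precedes it below -/
import Mathlib

section
/- Let H be a real inner product space, 0 < α < 1, and let φ^0, φ^1, …, φ^N be elements of H with φ^0 = 0. Define the discrete fractional derivative D_τ^α φ^n = τ^{−α} ∑_{j=0}^{n} b_{n−j} φ^j with weights b_k = (-1)^k (α choose k), and set φ^{n,α} = (1 − α/2) φ^n + (α/2) φ^{n−1}. Then for each n = 1,…,N, (1/2) D_τ^α (‖φ‖²)^n ≤ ⟨D_τ^α φ^n, φ^{n,α}⟩, where D_τ^α (‖φ‖²)^n = τ^{−α} ∑_{j=0}^{n} b_{n−j} ‖φ^j‖². -/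
/-- Grünwald–Letnikov / fractional Crank–Nicolson weight
`b_k = (-1)^k Γ(α+1) / (Γ(k+1) Γ(α-k+1))`. -/
noncomputable def fracCNWeight (α : ℝ) (k : ℕ) : ℝ :=
  (-1 : ℝ) ^ k * Real.Gamma (α + 1) / (Real.Gamma ((k : ℝ) + 1) * Real.Gamma (α - (k : ℝ) + 1))

lemma gamma_sub_nat_ne_zero {α : ℝ} (hα0 : 0 < α) (hα1 : α < 1) (k : ℕ) :
    Real.Gamma (α - (k : ℝ)) ≠ 0 := by
  apply Real.Gamma_ne_zero
  intro m h
  rcases Nat.lt_or_ge k (m + 1) with hk | hk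
  · have : (k : ℝ) ≤ m := by exact_mod_cast Nat.lt_succ_iff.mp hk
    linarith
  · have : (m : ℝ) + 1 ≤ k := by exact_mod_cast hk
    linarith

lemma fracCNWeight_zero {α : ℝ} (hα0 : 0 < α) : fracCNWeight α 0 = 1 := by
  have h : Real.Gamma (α + 1) ≠ 0 := (Real.Gamma_pos_of_pos (by linarith)).ne'
  simp [fracCNWeight, Real.Gamma_one, div_self h]

lemma fracCNWeight_succ {α : ℝ} (hα0 : 0 < α) (hα1 : α < 1) (k : ℕ) :
    fracCNWeight α (k + 1) = fracCNWeight α k * (((k : ℝ) - α) / ((k : ℝ) + 1)) := by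
  have hk1 : ((k : ℝ) + 1) ≠ 0 := by positivity
  have hgk : Real.Gamma ((k : ℝ) + 1) ≠ 0 := (Real.Gamma_pos_of_pos (by positivity)).ne'
  have hak : α - (k : ℝ) ≠ 0 := by
    intro h
    rcases Nat.eq_zero_or_pos k with rfl | hk
    · simp at h; linarith
    · have : (1 : ℝ) ≤ k := by exact_mod_cast hk
      nlinarith [sub_eq_zero.mp h]
  have hgak : Real.Gamma (α - (k : ℝ)) ≠ 0 := gamma_sub_nat_ne_zero hα0 hα1 k
  have h1 : Real.Gamma ((k : ℝ) + 1 + 1) = ((k : ℝ) + 1) * Real.Gamma ((k : ℝ) + 1) :=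
    Real.Gamma_add_one hk1
  have h2 : Real.Gamma (α - (k : ℝ) + 1) = (α - (k : ℝ)) * Real.Gamma (α - (k : ℝ)) :=
    Real.Gamma_add_one hak
  unfold fracCNWeight
  push_cast
  rw [show α - ((k : ℝ) + 1) + 1 = α - (k : ℝ) by ring, h1, h2]
  field_simp
  ring

lemma fracCNWeight_one {α : ℝ} (hα0 : 0 < α) (hα1 : α < 1) : fracCNWeight α 1 = -α := by
  have := fracCNWeight_succ hα0 hα1 0
  rw [fracCNWeight_zero hα0] at this
  simpa using this

noncomputable def cseq (α : ℝ) : ℕ → ℝ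
  | 0 => 1
  | (m + 1) => cseq α m * (((m : ℝ) + 1 - α) / ((m : ℝ) + 1))

lemma cseq_pos {α : ℝ} (hα1 : α < 1) : ∀ m, 0 < cseq α m := by
  intro m
  induction m with
  | zero => norm_num [cseq]
  | succ m ih =>
      have h1 : (0:ℝ) < (m : ℝ) + 1 - α := by
        have : (0:ℝ) ≤ m := Nat.cast_nonneg m
        linarith
      have h2 : (0:ℝ) < (m : ℝ) + 1 := by positivity
      rw [cseq]
      positivity

lemma fracCNWeight_succ_eq {α : ℝ} (hα0 : 0 < α) (hα1 : α < 1) (k : ℕ) :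
    fracCNWeight α (k + 1) = -(α / ((k : ℝ) + 1)) * cseq α k := by
  induction k with
  | zero => simp [fracCNWeight_one hα0 hα1, cseq]
  | succ k ih =>
      rw [fracCNWeight_succ hα0 hα1 (k + 1), ih, cseq]
      have h1 : ((k : ℝ) + 1) ≠ 0 := by positivity
      have h2 : ((k : ℝ) + 1 + 1) ≠ 0 := by positivity
      push_cast
      field_simp

lemma fracCNWeight_succ_nonpos {α : ℝ} (hα0 : 0 < α) (hα1 : α < 1) (k : ℕ) :
    fracCNWeight α (k + 1) ≤ 0 := by
  rw [fracCNWeight_succ_eq hα0 hα1 k]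
  have h1 : (0:ℝ) < (k : ℝ) + 1 := by positivity
  have := cseq_pos (α := α) hα1 k
  have : 0 < α / ((k : ℝ) + 1) * cseq α k := by positivity
  linarith

lemma sum_fracCNWeight {α : ℝ} (hα0 : 0 < α) (hα1 : α < 1) (m : ℕ) :
    ∑ k ∈ Finset.range (m + 1), fracCNWeight α k = cseq α m := by
  induction m with
  | zero => simp [fracCNWeight_zero hα0, cseq]
  | succ m ih =>
      rw [Finset.sum_range_succ, ih, fracCNWeight_succ_eq hα0 hα1 m, cseq]
      have h1 : ((m : ℝ) + 1) ≠ 0 := by positivity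
      field_simp
      ring

open scoped RealInnerProductSpace

theorem stmt3 {H : Type*} [NormedAddCommGroup H] [InnerProductSpace ℝ H]
    (α τ : ℝ) (hα0 : 0 < α) (hα1 : α < 1) (hτ : 0 < τ)
    (N : ℕ) (φ : ℕ → H) (hφ0 : φ 0 = 0) :
    ∀ n : ℕ, 1 ≤ n → n ≤ N →
      (1 / 2) * (τ ^ (-α) * ∑ j ∈ Finset.range (n + 1), fracCNWeight α (n - j) * ‖φ j‖ ^ 2)
        ≤ ⟪τ ^ (-α) • ∑ j ∈ Finset.range (n + 1), fracCNWeight α (n - j) • φ j,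
            (1 - α / 2) • φ n + (α / 2) • φ (n - 1)⟫ := by
  intro n hn1 _
  obtain ⟨m, rfl⟩ : ∃ m, n = m + 1 := ⟨n - 1, (Nat.succ_pred_eq_of_pos hn1).symm⟩
  simp only [Nat.add_sub_cancel]
  set g : H := (1 - α / 2) • φ (m + 1) + (α / 2) • φ m with hg
  set B : ℕ → ℝ := fun j => fracCNWeight α (m + 1 - j) with hB
  have htpos : (0:ℝ) < τ ^ (-α) := Real.rpow_pos_of_pos hτ _
  rw [real_inner_smul_left, sum_inner]
  simp only [real_inner_smul_left]
  rw [show (1 / 2 : ℝ) * (τ ^ (-α) * ∑ j ∈ Finset.range (m + 1 + 1), B j * ‖φ j‖ ^ 2)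
      = τ ^ (-α) * ((1 / 2) * ∑ j ∈ Finset.range (m + 1 + 1), B j * ‖φ j‖ ^ 2) by ring]
  apply mul_le_mul_of_nonneg_left _ htpos.le
  -- key inequality
  have hpolar : ∀ j ∈ Finset.range (m + 1 + 1), B j * ⟪φ j, g⟫ =
      (1 / 2) * (B j * ‖φ j‖ ^ 2) + (1 / 2) * (B j * ‖g‖ ^ 2)
        - (1 / 2) * (B j * ‖φ j - g‖ ^ 2) := by
    intro j _
    have h := @norm_sub_sq_real H _ _ (φ j) g
    linear_combination (B j / 2) * h
  rw [Finset.sum_congr rfl hpolar]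
  rw [Finset.sum_sub_distrib, Finset.sum_add_distrib, ← Finset.mul_sum, ← Finset.mul_sum,
      ← Finset.mul_sum]
  have hsumB : ∑ j ∈ Finset.range (m + 1 + 1), B j = cseq α (m + 1) := by
    rw [← sum_fracCNWeight hα0 hα1 (m + 1)]
    exact Finset.sum_range_reflect (fun k => fracCNWeight α k) (m + 2)
  have hBg : 0 ≤ ∑ j ∈ Finset.range (m + 1 + 1), B j * ‖g‖ ^ 2 := by
    rw [← Finset.sum_mul, hsumB]
    have := cseq_pos (α := α) hα1 (m + 1)
    positivity
  have hBe : ∑ j ∈ Finset.range (m + 1 + 1), B j * ‖φ j - g‖ ^ 2 ≤ 0 := by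
    rw [Finset.sum_range_succ, Finset.sum_range_succ]
    have hrest : ∑ j ∈ Finset.range m, B j * ‖φ j - g‖ ^ 2 ≤ 0 := by
      apply Finset.sum_nonpos
      intro j hj
      have hj' : j < m := Finset.mem_range.mp hj
      obtain ⟨k, hk⟩ : ∃ k, m + 1 - j = k + 1 :=
        ⟨m - j, by omega⟩
      have hBj : B j ≤ 0 := by
        rw [hB]; dsimp only; rw [hk]; exact fracCNWeight_succ_nonpos hα0 hα1 k
      exact mul_nonpos_of_nonpos_of_nonneg hBj (by positivity)
    have hBm : B m = -α := by
      rw [hB]; dsimp only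
      rw [show m + 1 - m = 1 by omega]
      exact fracCNWeight_one hα0 hα1
    have hBm1 : B (m + 1) = 1 := by
      rw [hB]; dsimp only
      rw [show m + 1 - (m + 1) = 0 by omega]
      exact fracCNWeight_zero hα0
    have h1 : φ (m + 1) - g = (α / 2) • (φ (m + 1) - φ m) := by
      rw [hg]
      module
    have h2 : φ m - g = (α / 2 - 1) • (φ (m + 1) - φ m) := by
      rw [hg]
      module
    have hn1 : ‖φ (m + 1) - g‖ ^ 2 = (α / 2) ^ 2 * ‖φ (m + 1) - φ m‖ ^ 2 := by
      rw [h1, norm_smul, mul_pow, Real.norm_eq_abs, sq_abs]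
    have hn2 : ‖φ m - g‖ ^ 2 = (α / 2 - 1) ^ 2 * ‖φ (m + 1) - φ m‖ ^ 2 := by
      rw [h2, norm_smul, mul_pow, Real.norm_eq_abs, sq_abs]
    rw [hBm, hBm1, hn1, hn2]
    nlinarith [sq_nonneg ‖φ (m + 1) - φ m‖, sq_nonneg (1 - α)]
  linarith
end

section
/- Let 0 < α < 1 and suppose a nonnegative sequence (y^n)_{n≥0} with y^0 = 0 satisfies D_τ^α y^n ≤ C₀ for all 1 ≤ n ≤ N, where D_τ^α y^n = τ^{−α} ∑_{j=0}^n b_{n−j} y^j with b_k = (-1)^k (α choose k) and C₀ ≥ 0. Then y^n ≤ C₀ t_n^α / Γ(1+α) · 2 E_α(0) = 2 C₀ t_n^α / Γ(1+α) for all 1 ≤ n ≤ N. -/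
open Nat

namespace FracAux

open Finset

/-- coefficients of `(1-x)^{-α}` -/
noncomputable def glq (α : ℝ) : ℕ → ℝ
  | 0 => 1
  | k + 1 => glq α k * (((k : ℝ) + α) / ((k : ℝ) + 1))

/-- partial sums of `glq` -/
noncomputable def glQ (α : ℝ) : ℕ → ℝ
  | 0 => 1
  | k + 1 => glQ α k + glq α (k + 1)

variable {α : ℝ}

lemma gamma_sub_nat_ne_zero (hα0 : 0 < α) (hα1 : α < 1) (k : ℕ) :
    Real.Gamma (α - (k : ℝ)) ≠ 0 := by
  apply Real.Gamma_ne_zero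
  intro m hm
  have h1 : ((m : ℝ)) < (k : ℝ) := by linarith
  have h2 : (k : ℝ) < (m : ℝ) + 1 := by linarith
  have h1' : m < k := by exact_mod_cast h1
  have h2' : k < m + 1 := by exact_mod_cast h2
  omega

lemma weight_zero (hα0 : 0 < α) : fracCNWeight α 0 = 1 := by
  have h : Real.Gamma (α + 1) ≠ 0 := (Real.Gamma_pos_of_pos (by linarith)).ne'
  simp only [fracCNWeight, pow_zero, Nat.cast_zero, zero_add, sub_zero, Real.Gamma_one,
    one_mul]
  exact div_self h

lemma weight_rec (hα0 : 0 < α) (hα1 : α < 1) (k : ℕ) :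
    ((k : ℝ) + 1) * fracCNWeight α (k + 1) = ((k : ℝ) - α) * fracCNWeight α k := by
  have hk1 : (0:ℝ) < (k:ℝ) + 1 := by positivity
  have hGk : Real.Gamma ((k:ℝ)+1) ≠ 0 := (Real.Gamma_pos_of_pos hk1).ne'
  have hak : α - (k:ℝ) ≠ 0 := by
    rcases Nat.eq_zero_or_pos k with hk | hk
    · subst hk; simp only [Nat.cast_zero, sub_zero]; linarith
    · have : (1:ℝ) ≤ (k:ℝ) := by exact_mod_cast hk
      intro hc; linarith [sub_eq_zero.mp hc]
  have hGak : Real.Gamma (α - (k:ℝ)) ≠ 0 := gamma_sub_nat_ne_zero hα0 hα1 k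
  unfold fracCNWeight
  push_cast
  rw [show α - ((k:ℝ)+1) + 1 = α - (k:ℝ) from by ring,
    Real.Gamma_add_one hk1.ne',
    show α - (k:ℝ) + 1 = (α - (k:ℝ)) + 1 from rfl,
    Real.Gamma_add_one hak, pow_succ]
  field_simp
  ring

lemma weight_nonpos (hα0 : 0 < α) (hα1 : α < 1) (k : ℕ) :
    fracCNWeight α (k + 1) ≤ 0 := by
  induction k with
  | zero =>
    have h := weight_rec hα0 hα1 0
    rw [weight_zero hα0] at h
    norm_num at h
    rw [h]
    linarith
  | succ k ih =>
    have h := weight_rec hα0 hα1 (k+1)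
    push_cast at h
    have hkc : (0:ℝ) ≤ (k:ℝ) := Nat.cast_nonneg k
    have h1 : ((k:ℝ) + 1 - α) * fracCNWeight α (k+1) ≤ 0 :=
      mul_nonpos_iff.mpr (Or.inl ⟨by linarith, ih⟩)
    nlinarith [h, h1]

lemma glq_nonneg (hα0 : 0 < α) (k : ℕ) : 0 ≤ glq α k := by
  induction k with
  | zero => norm_num [glq]
  | succ k ih =>
    rw [glq]
    positivity

lemma glq_rec (k : ℕ) : ((k : ℝ) + 1) * glq α (k + 1) = ((k : ℝ) + α) * glq α k := by
  rw [glq]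
  have : ((k : ℝ) + 1) ≠ 0 := by positivity
  field_simp

/-- convolution of `b` and `q` -/
noncomputable def conv (α : ℝ) (n : ℕ) : ℝ :=
  ∑ j ∈ Finset.range (n + 1), fracCNWeight α (n - j) * glq α j

lemma conv_zero (hα0 : 0 < α) : conv α 0 = 1 := by
  simp [conv, weight_zero hα0, glq]

lemma conv_rec (hα0 : 0 < α) (hα1 : α < 1) (m : ℕ) :
    ((m : ℝ) + 1) * conv α (m + 1) = (m : ℝ) * conv α m := by
  have key : ∀ j ∈ Finset.range (m + 2),
      ((m : ℝ) + 1) * (fracCNWeight α (m + 1 - j) * glq α j)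
        = ((m + 1 - j : ℕ) : ℝ) * fracCNWeight α (m + 1 - j) * glq α j
          + (j : ℝ) * fracCNWeight α (m + 1 - j) * glq α j := by
    intro j hj
    rw [Finset.mem_range] at hj
    have hj' : j ≤ m + 1 := by omega
    have : ((m + 1 - j : ℕ) : ℝ) = (m : ℝ) + 1 - (j : ℝ) := by
      push_cast [Nat.cast_sub hj']; ring
    rw [this]; ring
  rw [conv, Finset.mul_sum, Finset.sum_congr rfl key, Finset.sum_add_distrib]
  have hA : ∑ j ∈ Finset.range (m + 2),
      ((m + 1 - j : ℕ) : ℝ) * fracCNWeight α (m + 1 - j) * glq α j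
      = ∑ j ∈ Finset.range (m + 1), (((m - j : ℕ) : ℝ) - α) * fracCNWeight α (m - j) * glq α j := by
    rw [Finset.sum_range_succ]
    have hlast : ((m + 1 - (m + 1) : ℕ) : ℝ) * fracCNWeight α (m + 1 - (m + 1)) * glq α (m + 1) = 0 := by
      simp
    rw [hlast, add_zero]
    refine Finset.sum_congr rfl fun j hj => ?_
    rw [Finset.mem_range] at hj
    have h1 : m + 1 - j = (m - j) + 1 := by omega
    have h2 : ((m + 1 - j : ℕ) : ℝ) = ((m - j : ℕ) : ℝ) + 1 := by rw [h1]; push_cast; ring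
    rw [h2, h1, weight_rec hα0 hα1 (m - j)]
  have hB : ∑ j ∈ Finset.range (m + 2),
      (j : ℝ) * fracCNWeight α (m + 1 - j) * glq α j
      = ∑ j ∈ Finset.range (m + 1), ((j : ℝ) + α) * fracCNWeight α (m - j) * glq α j := by
    rw [Finset.sum_range_succ']
    simp only [Nat.cast_zero, zero_mul, add_zero]
    refine Finset.sum_congr rfl fun i hi => ?_
    rw [Finset.mem_range] at hi
    have h1 : m + 1 - (i + 1) = m - i := by omega
    rw [h1]
    push_cast
    have := glq_rec (α := α) i
    calc ((i : ℝ) + 1) * fracCNWeight α (m - i) * glq α (i + 1)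
        = fracCNWeight α (m - i) * (((i : ℝ) + 1) * glq α (i + 1)) := by ring
      _ = fracCNWeight α (m - i) * (((i : ℝ) + α) * glq α i) := by rw [this]
      _ = (((i : ℝ)) + α) * fracCNWeight α (m - i) * glq α i := by ring
  rw [hA, hB, conv, Finset.mul_sum, ← Finset.sum_add_distrib]
  refine Finset.sum_congr rfl fun j hj => ?_
  rw [Finset.mem_range] at hj
  have : ((m - j : ℕ) : ℝ) = (m : ℝ) - (j : ℝ) := by
    push_cast [Nat.cast_sub (by omega : j ≤ m)]; ring
  rw [this]
  ring

lemma conv_succ_eq_zero (hα0 : 0 < α) (hα1 : α < 1) (n : ℕ) : conv α (n + 1) = 0 := by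
  induction n with
  | zero => simpa using conv_rec hα0 hα1 0
  | succ n ih =>
    have hthis := conv_rec hα0 hα1 (n + 1)
    rw [ih, mul_zero] at hthis
    have h2 : ((n : ℝ) + 1 + 1) ≠ 0 := by positivity
    push_cast at hthis
    exact (mul_eq_zero.1 hthis).resolve_left h2

/-- `b * Q = 1` -/
lemma weight_conv_glQ (hα0 : 0 < α) (hα1 : α < 1) (n : ℕ) :
    ∑ j ∈ Finset.range (n + 1), fracCNWeight α (n - j) * glQ α j = 1 := by
  induction n with
  | zero => simp [weight_zero hα0, glQ]
  | succ n ih =>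
    have hconv : conv α (n+1) = (∑ i ∈ Finset.range (n+1),
        fracCNWeight α (n - i) * glq α (i+1)) + fracCNWeight α (n+1) * glq α 0 := by
      rw [conv, Finset.sum_range_succ' _ (n+1)]
      simp only [Nat.sub_zero]
      congr 1
      refine Finset.sum_congr rfl fun i hi => ?_
      rw [Finset.mem_range] at hi
      have h1 : n + 1 - (i+1) = n - i := by omega
      rw [h1]
    have hQ0 : glQ α 0 = 1 := rfl
    have hq0 : glq α 0 = 1 := rfl
    have hsplit : ∑ j ∈ Finset.range (n + 2), fracCNWeight α (n + 1 - j) * glQ α j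
        = conv α (n + 1) + ∑ j ∈ Finset.range (n + 1), fracCNWeight α (n - j) * glQ α j := by
      calc ∑ j ∈ Finset.range (n + 2), fracCNWeight α (n + 1 - j) * glQ α j
          = (∑ i ∈ Finset.range (n+1), fracCNWeight α (n+1-(i+1)) * glQ α (i+1))
            + fracCNWeight α (n+1-0) * glQ α 0 := Finset.sum_range_succ' _ (n+1)
        _ = (∑ i ∈ Finset.range (n+1), (fracCNWeight α (n-i) * glQ α i
              + fracCNWeight α (n-i) * glq α (i+1))) + fracCNWeight α (n+1) * glq α 0 := by
            rw [hQ0, hq0]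
            simp only [Nat.sub_zero]
            congr 1
            refine Finset.sum_congr rfl fun i hi => ?_
            rw [Finset.mem_range] at hi
            have h1 : n + 1 - (i+1) = n - i := by omega
            rw [h1, glQ]
            ring
        _ = conv α (n+1) + ∑ j ∈ Finset.range (n+1), fracCNWeight α (n-j) * glQ α j := by
            rw [Finset.sum_add_distrib, hconv]
            ring
    rw [hsplit, conv_succ_eq_zero hα0 hα1, zero_add, ih]

lemma glq_gamma (hα0 : 0 < α) (n : ℕ) :
    glq α n * (n ! : ℝ) * Real.Gamma α = Real.Gamma ((n : ℝ) + α) := by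
  induction n with
  | zero => simp [glq]
  | succ n ih =>
    have hn0 : (0:ℝ) ≤ (n:ℝ) := Nat.cast_nonneg n
    have hpos : (0:ℝ) < (n:ℝ) + α := by linarith
    have hrec := glq_rec (α := α) n
    have hfac : ((n+1)! : ℝ) = ((n:ℝ)+1) * (n ! : ℝ) := by
      push_cast [Nat.factorial_succ]; ring
    have hG : Real.Gamma ((n:ℝ) + α + 1) = ((n:ℝ)+α) * Real.Gamma ((n:ℝ)+α) :=
      Real.Gamma_add_one hpos.ne'
    have hcast : ((n+1:ℕ):ℝ) + α = (n:ℝ) + α + 1 := by push_cast; ring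
    rw [hcast, hG, ← ih, hfac]
    calc glq α (n+1) * (((n:ℝ)+1) * (n ! : ℝ)) * Real.Gamma α
        = (((n:ℝ)+1) * glq α (n+1)) * ((n ! : ℝ) * Real.Gamma α) := by ring
      _ = (((n:ℝ)+α) * glq α n) * ((n ! : ℝ) * Real.Gamma α) := by rw [hrec]
      _ = ((n:ℝ)+α) * (glq α n * (n ! : ℝ) * Real.Gamma α) := by ring

lemma glQ_gamma (hα0 : 0 < α) (n : ℕ) :
    Real.Gamma (1 + α) * (glQ α n * (n ! : ℝ)) = Real.Gamma ((n : ℝ) + 1 + α) := by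
  induction n with
  | zero => simp [glQ]
  | succ n ih =>
    have hn0 : (0:ℝ) ≤ (n:ℝ) := Nat.cast_nonneg n
    have hpos : (0:ℝ) < (n:ℝ) + 1 + α := by linarith
    have hG1α : Real.Gamma (1 + α) = α * Real.Gamma α := by
      rw [add_comm]; exact Real.Gamma_add_one hα0.ne'
    have hfac : ((n+1)! : ℝ) = ((n:ℝ)+1) * (n ! : ℝ) := by
      push_cast [Nat.factorial_succ]; ring
    have hq := glq_gamma hα0 (n+1)
    have hc1 : ((n+1:ℕ):ℝ) + α = (n:ℝ) + 1 + α := by push_cast; ring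
    rw [hc1, hfac] at hq
    have hG : Real.Gamma ((n:ℝ) + 1 + α + 1) = ((n:ℝ)+1+α) * Real.Gamma ((n:ℝ)+1+α) :=
      Real.Gamma_add_one hpos.ne'
    have hcast : ((n+1:ℕ):ℝ) + 1 + α = (n:ℝ) + 1 + α + 1 := by push_cast; ring
    rw [hcast, hG, glQ, hfac]
    calc Real.Gamma (1+α) * ((glQ α n + glq α (n+1)) * (((n:ℝ)+1) * (n ! : ℝ)))
        = ((n:ℝ)+1) * (Real.Gamma (1+α) * (glQ α n * (n ! : ℝ)))
          + α * (glq α (n+1) * (((n:ℝ)+1) * (n ! : ℝ)) * Real.Gamma α) := by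
          rw [hG1α]; ring
      _ = ((n:ℝ)+1) * Real.Gamma ((n:ℝ)+1+α) + α * Real.Gamma ((n:ℝ)+1+α) := by
          rw [ih, hq]
      _ = ((n:ℝ)+1+α) * Real.Gamma ((n:ℝ)+1+α) := by ring

lemma gamma_ratio_le (hα0 : 0 < α) (hα1 : α < 1) (n : ℕ) :
    Real.Gamma ((n:ℝ) + 1 + α) ≤ (n ! : ℝ) * ((n:ℝ) + 1) ^ α := by
  have hn0 : (0:ℝ) ≤ (n:ℝ) := Nat.cast_nonneg n
  have hx : ((n:ℝ) + 1) ∈ Set.Ioi (0:ℝ) := by simp only [Set.mem_Ioi]; linarith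
  have hy2 : ((n:ℝ) + 2) ∈ Set.Ioi (0:ℝ) := by simp only [Set.mem_Ioi]; linarith
  have hc := Real.convexOn_log_Gamma.2 hx hy2 (by linarith : (0:ℝ) ≤ 1 - α) hα0.le
    (by ring : (1 - α) + α = 1)
  simp only [Function.comp, smul_eq_mul] at hc
  rw [show (1-α) * ((n:ℝ)+1) + α * ((n:ℝ)+2) = (n:ℝ)+1+α from by ring] at hc
  have hg1 : 0 < Real.Gamma ((n:ℝ)+1) := Real.Gamma_pos_of_pos (by linarith)
  have hg2 : 0 < Real.Gamma ((n:ℝ)+2) := Real.Gamma_pos_of_pos (by linarith)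
  have hga : 0 < Real.Gamma ((n:ℝ)+1+α) := Real.Gamma_pos_of_pos (by linarith)
  have h2 : Real.Gamma ((n:ℝ)+1+α)
      ≤ Real.Gamma ((n:ℝ)+1) ^ (1-α) * Real.Gamma ((n:ℝ)+2) ^ α := by
    rw [← Real.exp_log hga]
    calc Real.exp (Real.log (Real.Gamma ((n:ℝ)+1+α)))
        ≤ Real.exp ((1-α) * Real.log (Real.Gamma ((n:ℝ)+1))
            + α * Real.log (Real.Gamma ((n:ℝ)+2))) := Real.exp_le_exp.mpr hc
      _ = Real.Gamma ((n:ℝ)+1) ^ (1-α) * Real.Gamma ((n:ℝ)+2) ^ α := by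
          rw [Real.rpow_def_of_pos hg1, Real.rpow_def_of_pos hg2, ← Real.exp_add]
          congr 1
          ring
  have hGamma2 : Real.Gamma ((n:ℝ)+2) = ((n:ℝ)+1) * Real.Gamma ((n:ℝ)+1) := by
    rw [show (n:ℝ)+2 = ((n:ℝ)+1) + 1 from by ring, Real.Gamma_add_one (by linarith)]
  have h3 : Real.Gamma ((n:ℝ)+1) ^ (1-α) * Real.Gamma ((n:ℝ)+2) ^ α
      = Real.Gamma ((n:ℝ)+1) * ((n:ℝ)+1) ^ α := by
    rw [hGamma2, Real.mul_rpow (by linarith) hg1.le]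
    calc Real.Gamma ((n:ℝ)+1) ^ (1-α) * (((n:ℝ)+1) ^ α * Real.Gamma ((n:ℝ)+1) ^ α)
        = (Real.Gamma ((n:ℝ)+1) ^ (1-α) * Real.Gamma ((n:ℝ)+1) ^ α) * ((n:ℝ)+1) ^ α := by
          ring
      _ = Real.Gamma ((n:ℝ)+1) * ((n:ℝ)+1) ^ α := by
          rw [← Real.rpow_add hg1]
          norm_num
  rw [h3] at h2
  rwa [Real.Gamma_nat_eq_factorial] at h2

end FracAux

theorem stmt9 (α τ C₀ : ℝ) (hα0 : 0 < α) (hα1 : α < 1) (hτ : 0 < τ) (hC₀ : 0 ≤ C₀)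
    (N : ℕ) (y : ℕ → ℝ) (hy : ∀ n, 0 ≤ y n) (hy0 : y 0 = 0)
    (h : ∀ n : ℕ, 1 ≤ n → n ≤ N →
      τ ^ (-α) * ∑ j ∈ Finset.range (n + 1), fracCNWeight α (n - j) * y j ≤ C₀) :
    ∀ n : ℕ, 1 ≤ n → n ≤ N →
      y n ≤ 2 * C₀ * ((n : ℝ) * τ) ^ α / Real.Gamma (1 + α) := by
  have key : ∀ n, n ≤ N → y n ≤ C₀ * τ ^ α * FracAux.glQ α n := by
    intro n
    induction n using Nat.strong_induction_on with
    | _ n ih =>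
      cases n with
      | zero =>
        intro _
        rw [hy0]
        have hQ0 : FracAux.glQ α 0 = 1 := rfl
        rw [hQ0, mul_one]
        exact mul_nonneg hC₀ (Real.rpow_nonneg hτ.le α)
      | succ m =>
        intro hnN
        have hτα : (0:ℝ) < τ ^ α := Real.rpow_pos_of_pos hτ α
        have hS := h (m+1) (by omega) hnN
        have hS' : (∑ j ∈ Finset.range (m+1+1), fracCNWeight α (m+1-j) * y j)
            ≤ C₀ * τ ^ α := by
          rw [Real.rpow_neg hτ.le] at hS
          have h2 := mul_le_mul_of_nonneg_left hS hτα.le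
          rw [← mul_assoc, mul_inv_cancel₀ hτα.ne', one_mul] at h2
          linarith
        have hsplit : (∑ j ∈ Finset.range (m+1+1), fracCNWeight α (m+1-j) * y j)
            = (∑ j ∈ Finset.range (m+1), fracCNWeight α (m+1-j) * y j) + y (m+1) := by
          rw [Finset.sum_range_succ, Nat.sub_self, FracAux.weight_zero hα0, one_mul]
        have hterm : ∀ j ∈ Finset.range (m+1),
            fracCNWeight α (m+1-j) * (C₀ * τ ^ α * FracAux.glQ α j)
              ≤ fracCNWeight α (m+1-j) * y j := by
          intro j hj
          rw [Finset.mem_range] at hj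
          have hw : fracCNWeight α (m+1-j) ≤ 0 := by
            have h1 : m + 1 - j = (m - j) + 1 := by omega
            rw [h1]
            exact FracAux.weight_nonpos hα0 hα1 (m-j)
          have hyj := ih j (by omega) (by omega)
          nlinarith [mul_nonneg (neg_nonneg.mpr hw) (sub_nonneg.mpr hyj)]
        have hsum2 := Finset.sum_le_sum hterm
        have h1 := FracAux.weight_conv_glQ hα0 hα1 (m+1)
        rw [Finset.sum_range_succ, Nat.sub_self, FracAux.weight_zero hα0, one_mul] at h1
        have hU : ∑ j ∈ Finset.range (m+1),
            fracCNWeight α (m+1-j) * (C₀ * τ ^ α * FracAux.glQ α j)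
            = C₀ * τ ^ α - C₀ * τ ^ α * FracAux.glQ α (m+1) := by
          have hU1 : ∑ j ∈ Finset.range (m+1),
              fracCNWeight α (m+1-j) * (C₀ * τ ^ α * FracAux.glQ α j)
              = C₀ * τ ^ α * ∑ j ∈ Finset.range (m+1),
                  fracCNWeight α (m+1-j) * FracAux.glQ α j := by
            rw [Finset.mul_sum]
            exact Finset.sum_congr rfl fun j _ => by ring
          have hU2 : ∑ j ∈ Finset.range (m+1), fracCNWeight α (m+1-j) * FracAux.glQ α j
              = 1 - FracAux.glQ α (m+1) := by linarith
          rw [hU1, hU2]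
          ring
        rw [hU] at hsum2
        linarith
  intro n hn1 hnN
  have hn0 : (1:ℝ) ≤ (n:ℝ) := by exact_mod_cast hn1
  have hG : 0 < Real.Gamma (1+α) := Real.Gamma_pos_of_pos (by linarith)
  have hfac : (0:ℝ) < (n ! : ℝ) := by exact_mod_cast Nat.factorial_pos n
  have hnp1 : ((n:ℝ)+1) ^ α ≤ 2 * (n:ℝ) ^ α := by
    have h1 : ((n:ℝ)+1) ≤ 2*(n:ℝ) := by linarith
    have h2 : ((n:ℝ)+1) ^ α ≤ (2*(n:ℝ)) ^ α :=
      Real.rpow_le_rpow (by linarith) h1 hα0.le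
    have h3 : (2*(n:ℝ)) ^ α = (2:ℝ) ^ α * (n:ℝ) ^ α :=
      Real.mul_rpow (by norm_num) (Nat.cast_nonneg n)
    have h4 : (2:ℝ) ^ α ≤ 2 := by
      calc (2:ℝ) ^ α ≤ (2:ℝ) ^ (1:ℝ) :=
            Real.rpow_le_rpow_of_exponent_le (by norm_num) hα1.le
        _ = 2 := Real.rpow_one 2
    have h5 : (0:ℝ) ≤ (n:ℝ) ^ α := Real.rpow_nonneg (Nat.cast_nonneg n) α
    calc ((n:ℝ)+1) ^ α ≤ (2:ℝ) ^ α * (n:ℝ) ^ α := by rw [← h3]; exact h2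
      _ ≤ 2 * (n:ℝ) ^ α := mul_le_mul_of_nonneg_right h4 h5
  have hQle : FracAux.glQ α n ≤ 2 * (n:ℝ) ^ α / Real.Gamma (1+α) := by
    have hg := FracAux.glQ_gamma hα0 n
    have hr := FracAux.gamma_ratio_le hα0 hα1 n
    rw [le_div_iff₀ hG]
    have hmul : FracAux.glQ α n * Real.Gamma (1+α) * (n ! : ℝ)
        ≤ 2 * (n:ℝ) ^ α * (n ! : ℝ) := by
      calc FracAux.glQ α n * Real.Gamma (1+α) * (n ! : ℝ)
          = Real.Gamma (1+α) * (FracAux.glQ α n * (n ! : ℝ)) := by ring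
        _ = Real.Gamma ((n:ℝ)+1+α) := hg
        _ ≤ (n ! : ℝ) * ((n:ℝ)+1) ^ α := hr
        _ ≤ (n ! : ℝ) * (2 * (n:ℝ) ^ α) := mul_le_mul_of_nonneg_left hnp1 hfac.le
        _ = 2 * (n:ℝ) ^ α * (n ! : ℝ) := by ring
    exact le_of_mul_le_mul_right hmul hfac
  calc y n ≤ C₀ * τ ^ α * FracAux.glQ α n := key n hnN
    _ ≤ C₀ * τ ^ α * (2 * (n:ℝ) ^ α / Real.Gamma (1+α)) := by
        refine mul_le_mul_of_nonneg_left hQle ?_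
        exact mul_nonneg hC₀ (Real.rpow_nonneg hτ.le α)
    _ = 2 * C₀ * ((n:ℝ) ^ α * τ ^ α) / Real.Gamma (1+α) := by ring
    _ = 2 * C₀ * ((n:ℝ) * τ) ^ α / Real.Gamma (1+α) := by
        rw [← Real.mul_rpow (Nat.cast_nonneg n) hτ.le]
end
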